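/- arXiv:1205.4090 — 8 statements merged into one kernel-verified Lean document; each statement's English description precedes it below -/
import Mathlib

section
/- Let K be a field and let r and H be natural numbers. Suppose w_0, ..., w_r are r+1 row vectors in (K[x])^r whose coordinates all have degree at most H. Then there exists a non-trivial linear dependence relation ∑_{i=0}^{r} Q_i(x)·w_i = 0 in which Q_0, ..., Q_r are polynomials in K[x] whose degrees are all bounded by H·r. -/
/-!
Counting dimensions over `K`: `Q ↦ ∑ i, Q i • w i` is a `K`-linear map from `(r + 1)`-tuples of
polynomials of degree `≤ H r`, a space of dimension `(r + 1)(H r + 1)`, to `r`-tuples of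
polynomials of degree `≤ H r + H`, a space of dimension `r (H r + H + 1) = (r + 1)(H r + 1) - 1`.
So it has a nonzero kernel.
-/

open Matrix Module Polynomial

namespace Submodule

variable {K V : Type*} [DivisionRing K] [AddCommGroup V] [Module K V]

theorem pi_univ_const_eq_range_compLeft (ι : Type*) (p : Submodule K V) :
    pi Set.univ (fun _ : ι => p) = LinearMap.range (p.subtype.compLeft ι) := by
  rw [LinearMap.range_compLeft, range_subtype]

instance finiteDimensional_pi_univ_const {ι : Type*} [Finite ι] (p : Submodule K V)
    [FiniteDimensional K p] : FiniteDimensional K (pi Set.univ fun _ : ι => p) := by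
  rw [pi_univ_const_eq_range_compLeft]
  infer_instance

theorem finrank_pi_univ_const {ι : Type*} [Fintype ι] (p : Submodule K V)
    [FiniteDimensional K p] :
    finrank K (pi Set.univ fun _ : ι => p) = Fintype.card ι * finrank K p := by
  rw [pi_univ_const_eq_range_compLeft, LinearMap.finrank_range_of_inj, finrank_pi_fintype,
    Finset.sum_const, Finset.card_univ, smul_eq_mul]
  exact fun x y hxy => funext fun i => Subtype.ext (congrFun hxy i)

end Submodule

theorem LinearMap.exists_mem_ne_zero_map_eq_zero_of_finrank_lt {K V W : Type*} [DivisionRing K]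
    [AddCommGroup V] [Module K V] [AddCommGroup W] [Module K W] (f : V →ₗ[K] W)
    {S : Submodule K V} {T : Submodule K W} [FiniteDimensional K S] [FiniteDimensional K T]
    (hST : S ≤ T.comap f) (hlt : finrank K T < finrank K S) :
    ∃ v ∈ S, v ≠ 0 ∧ f v = 0 := by
  obtain ⟨v, hv, hv0⟩ := (Submodule.ne_bot_iff _).1 ((f.restrict hST).ker_ne_bot_of_finrank_lt hlt)
  exact ⟨v, v.2, fun h => hv0 (Subtype.ext h), congrArg Subtype.val hv⟩

namespace Polynomial

theorem mem_degreeLE_natCast {R : Type*} [Semiring R] {p : R[X]} {n : ℕ} :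
    p ∈ degreeLE R n ↔ p.natDegree ≤ n := by
  rw [mem_degreeLE, natDegree_le_iff_degree_le]

instance finite_degreeLE {R : Type*} [Semiring R] (n : ℕ) : Module.Finite R (degreeLE R n) := by
  rw [← degreeLT_succ_eq_degreeLE]
  infer_instance

theorem finrank_degreeLE (R : Type*) [Ring R] [StrongRankCondition R] (n : ℕ) :
    finrank R (degreeLE R n) = n + 1 := by
  rw [← degreeLT_succ_eq_degreeLE, finrank_eq_card_basis (degreeLT.basis R _), Fintype.card_fin]

theorem vecMul_mem_pi_degreeLE {R ι κ : Type*} [Semiring R] [Fintype ι] {w : Matrix ι κ R[X]}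
    {m H : ℕ} (hw : ∀ i j, (w i j).natDegree ≤ H) {Q : ι → R[X]}
    (hQ : Q ∈ Submodule.pi Set.univ fun _ => degreeLE R m) :
    Q ᵥ* w ∈ Submodule.pi Set.univ fun _ => degreeLE R (m + H : ℕ) := fun j _ =>
  mem_degreeLE_natCast.2 <| natDegree_sum_le_of_forall_le _ _ fun i _ =>
    natDegree_mul_le.trans <| add_le_add (mem_degreeLE_natCast.1 (hQ i trivial)) (hw i j)

end Polynomial

/-- Lemma 5.4: given `r+1` row vectors in `(K[x])^r` with coordinates of degree at most `H`,
there is a nontrivial linear dependence relation with polynomial coefficients of degree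
at most `H * r`. -/
theorem lemma_dependence_relation (K : Type*) [Field K] (r H : ℕ)
    (w : Fin (r + 1) → Fin r → Polynomial K)
    (hdeg : ∀ i j, (w i j).natDegree ≤ H) :
    ∃ Q : Fin (r + 1) → Polynomial K,
      (∃ i, Q i ≠ 0) ∧
      (∀ i, (Q i).natDegree ≤ H * r) ∧
      (∀ j, ∑ i, Q i * w i j = 0) := by
  have hdim : finrank K (Submodule.pi Set.univ fun _ : Fin r => degreeLE K (H * r + H : ℕ)) <
      finrank K (Submodule.pi Set.univ fun _ : Fin (r + 1) => degreeLE K (H * r : ℕ)) := by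
    simp only [Submodule.finrank_pi_univ_const, finrank_degreeLE, Fintype.card_fin]
    nlinarith
  obtain ⟨Q, hQdeg, hQ0, hQw⟩ :=
    ((vecMulLinear w).restrictScalars K).exists_mem_ne_zero_map_eq_zero_of_finrank_lt
      (fun _ => vecMul_mem_pi_degreeLE hdeg) hdim
  exact ⟨Q, Function.ne_iff.1 hQ0, fun i => mem_degreeLE_natCast.1 (hQdeg i trivial),
    congrFun hQw⟩
end

section
/- Let f_1, ..., f_s be formal power series with integer coefficients. If for infinitely many prime numbers p the reductions of f_1, ..., f_s modulo p are linearly dependent over the field F_p, then f_1, ..., f_s are linearly dependent over Q. -/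
/-!
Over `ℚ`, independence of `f_1, …, f_s` is already witnessed by the first `N` coefficients for
some `N`, since the kernels of the truncated coefficient maps form a decreasing chain in `ℚ^s`.
Let `A` be the integer `N × s` matrix of these coefficients. Its columns are independent over the
ordered field `ℚ`, so the Gram determinant `d = det (Aᵀ A)` is a nonzero integer, and for every
prime `p ∤ d` the columns of `A mod p`, hence the reductions `f_i mod p`, remain independent.
-/

open Function

theorem Fintype.not_linearIndependent_iff_exists_ne_zero {ι R M : Type*} [Fintype ι]
    [Ring R] [AddCommGroup M] [Module R M] {v : ι → M} :
    ¬LinearIndependent R v ↔ ∃ c : ι → R, c ≠ 0 ∧ ∑ i, c i • v i = 0 := by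
  rw [Fintype.not_linearIndependent_iff]
  simp only [ne_iff, Pi.zero_apply, and_comm]

theorem IsArtinian.exists_eq_bot_of_antitone_of_iInf_eq_bot {R M : Type*} [Ring R]
    [AddCommGroup M] [Module R M] [IsArtinian R M] {K : ℕ → Submodule R M} (hK : Antitone K)
    (h : ⨅ n, K n = ⊥) : ∃ n, K n = ⊥ := by
  obtain ⟨n, hn⟩ := IsArtinian.monotone_stabilizes ⟨OrderDual.toDual ∘ K, hK⟩
  refine ⟨n, eq_bot_iff.2 (h ▸ le_iInf fun m => ?_)⟩
  exact (congrArg OrderDual.ofDual (hn (max n m) le_sup_left)).le.trans (hK le_sup_right)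

namespace Matrix

variable {m n : Type*} [Fintype m] [Fintype n]

theorem injective_mulVec_of_isUnit_det_transpose_mul_self {R : Type*} [CommRing R]
    [DecidableEq n] {A : Matrix m n R} (h : IsUnit (Aᵀ * A).det) : Injective A.mulVec := by
  have hG : Injective (Aᵀ * A).mulVec :=
    mulVec_injective_of_isUnit ((isUnit_iff_isUnit_det _).2 h)
  refine Injective.of_comp (f := Aᵀ.mulVec) fun v w hvw => hG ?_
  rw [← mulVec_mulVec, ← mulVec_mulVec]
  exact hvw

theorem det_transpose_mul_self_ne_zero {K : Type*} [Field K] [LinearOrder K]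
    [IsStrictOrderedRing K] [DecidableEq n] {A : Matrix m n K} (h : Injective A.mulVec) :
    (Aᵀ * A).det ≠ 0 := by
  have hker : LinearMap.ker (Aᵀ * A).mulVecLin = ⊥ := by
    rw [ker_mulVecLin_transpose_mul_self, LinearMap.ker_eq_bot]
    exact h
  rw [← isUnit_iff_ne_zero, ← isUnit_iff_isUnit_det, ← mulVec_injective_iff_isUnit]
  exact LinearMap.ker_eq_bot.1 hker

theorem det_transpose_mul_self_map {R S : Type*} [CommRing R] [CommRing S] [DecidableEq n]
    (A : Matrix m n R) (φ : R →+* S) : ((A.map φ)ᵀ * A.map φ).det = φ (Aᵀ * A).det := by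
  rw [RingHom.map_det, RingHom.mapMatrix_apply, Matrix.map_mul, transpose_map]

theorem finite_setOf_prime_not_injective_mulVec_map_zmod {A : Matrix m n ℤ}
    (h : Injective (A.map (Int.castRingHom ℚ)).mulVec) :
    {p : ℕ | p.Prime ∧ ¬Injective (A.map (Int.castRingHom (ZMod p))).mulVec}.Finite := by
  classical
  have hd : (Aᵀ * A).det ≠ 0 := by
    have := det_transpose_mul_self_ne_zero h
    rwa [det_transpose_mul_self_map, ne_eq, map_eq_zero_iff _ Int.cast_injective] at this
  refine (Nat.divisors (Aᵀ * A).det.natAbs).finite_toSet.subset ?_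
  rintro p ⟨hp, hnot⟩
  have := Fact.mk hp
  refine Nat.mem_divisors.2 ⟨Int.natCast_dvd.1 ?_, Int.natAbs_ne_zero.2 hd⟩
  by_contra hdvd
  refine hnot (injective_mulVec_of_isUnit_det_transpose_mul_self ?_)
  rwa [det_transpose_mul_self_map, isUnit_iff_ne_zero, eq_intCast, ne_eq,
    ZMod.intCast_zmod_eq_zero_iff_dvd]

end Matrix

namespace PowerSeries

variable {ι : Type*}

noncomputable def coeffMatrix {R : Type*} [Semiring R] (f : ι → PowerSeries R) (N : ℕ) :
    Matrix (Fin N) ι R :=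
  Matrix.of fun k i => coeff k (f i)

theorem coeffMatrix_map {R S : Type*} [Semiring R] [Semiring S] (φ : R →+* S)
    (f : ι → PowerSeries R) (N : ℕ) :
    coeffMatrix (fun i => map φ (f i)) N = (coeffMatrix f N).map φ := by
  ext k i
  simp [coeffMatrix]

variable [Fintype ι] {R : Type*} [CommRing R]

theorem coeffMatrix_mulVec (f : ι → PowerSeries R) (N : ℕ) (c : ι → R) (k : Fin N) :
    (coeffMatrix f N).mulVec c k = coeff k (∑ i, c i • f i) := by
  simp [coeffMatrix, Matrix.mulVec, dotProduct, mul_comm]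

theorem linearIndependent_of_injective_mulVec_coeffMatrix {f : ι → PowerSeries R} {N : ℕ}
    (h : Injective (coeffMatrix f N).mulVec) : LinearIndependent R f := by
  rw [Fintype.linearIndependent_iff]
  intro c hc
  have : (coeffMatrix f N).mulVec c = (coeffMatrix f N).mulVec 0 := by
    ext k
    simp [coeffMatrix_mulVec, hc]
  exact congrFun (h this)

theorem exists_injective_mulVec_coeffMatrix {K : Type*} [Field K] {f : ι → PowerSeries K}
    (hf : LinearIndependent K f) : ∃ N, Injective (coeffMatrix f N).mulVec := by
  set kerN : ℕ → Submodule K (ι → K) := fun N => LinearMap.ker (coeffMatrix f N).mulVecLin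
  have mem_ker : ∀ N c, c ∈ kerN N ↔ ∀ k : Fin N, coeff k (∑ i, c i • f i) = 0 := by
    intro N c
    simp [kerN, funext_iff, coeffMatrix_mulVec]
  have hanti : Antitone kerN := fun M N hMN c hc => (mem_ker M c).2 fun k =>
    (mem_ker N c).1 hc ⟨k, k.2.trans_le hMN⟩
  have hinf : ⨅ N, kerN N = ⊥ := by
    refine eq_bot_iff.2 fun c hc => ?_
    have hsum : ∑ i, c i • f i = 0 := by
      ext k
      exact (mem_ker (k + 1) c).1 (Submodule.mem_iInf _ |>.1 hc _) ⟨k, k.lt_succ_self⟩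
    exact funext (Fintype.linearIndependent_iff.1 hf c hsum)
  obtain ⟨N, hN⟩ := IsArtinian.exists_eq_bot_of_antitone_of_iInf_eq_bot hanti hinf
  exact ⟨N, LinearMap.ker_eq_bot.1 hN⟩

end PowerSeries

open PowerSeries in
/-- Lemma 7.2: if the reductions modulo `p` of integer power series `f_1, …, f_s` are
linearly dependent over `𝔽_p` for infinitely many primes `p`, then `f_1, …, f_s` are
linearly dependent over `ℚ`. -/
theorem linear_dependence_from_infinitely_many_primes (s : ℕ)
    (f : Fin s → PowerSeries ℤ)
    (h : {p : ℕ | p.Prime ∧ ∃ c : Fin s → ZMod p, c ≠ 0 ∧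
        ∑ i, c i • PowerSeries.map (Int.castRingHom (ZMod p)) (f i) = 0}.Infinite) :
    ∃ c : Fin s → ℚ, c ≠ 0 ∧
      ∑ i, c i • PowerSeries.map (Int.castRingHom ℚ) (f i) = 0 := by
  simp_rw [← Fintype.not_linearIndependent_iff_exists_ne_zero] at h ⊢
  intro hindep
  obtain ⟨N, hN⟩ := exists_injective_mulVec_coeffMatrix hindep
  rw [coeffMatrix_map] at hN
  obtain ⟨p, ⟨hp, hdep⟩, hgood⟩ :=
    (h.sdiff (Matrix.finite_setOf_prime_not_injective_mulVec_map_zmod hN)).nonempty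
  refine hdep (linearIndependent_of_injective_mulVec_coeffMatrix (N := N) ?_)
  rw [coeffMatrix_map]
  exact not_not.1 fun hnot => hgood ⟨hp, hnot⟩
end

section
/- Let K be a perfect field of characteristic p > 0 and let W ⊆ K[[x_1,...,x_n]] be a K-vector subspace of finite dimension d that is invariant under all Cartier operators Λ_j for j ∈ {0,...,p-1}^n. Then for every f ∈ W, the diagonal Δ(f) ∈ K[[x]] is algebraic over K(x) of degree at most p^d. -/
/-!
Every `g ∈ K⟦t⟧` splits as `g = ∑_{j<p} (Λ_j g)^p t^j`, where `Λ_j` are the one-variable Cartier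
operators, and `Δ ∘ Λ_{(j,…,j)} = Λ_j ∘ Δ`. So `D = Δ(W)` is a `Λ`-stable space of dimension
`≤ d`, and raising the splitting to the `p^k`-th power puts `g^{p^k}` in the `K[t]`-span of
`{h^{p^(k+1)} : h ∈ D}`. Hence for `g ∈ D` the `d + 1` series `g, g^p, …, g^{p^d}` all lie in
the `K[t]`-span of the `p^d`-th powers of a basis of `D`; having only `d` generators, this span
forces a `K[t]`-linear relation among them, i.e. a nonzero polynomial of degree `≤ p^d`
vanishing at `g`.
-/

/-- The Cartier operator `Λ_j` on multivariate power series over a perfect field of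
characteristic `p`: `Λ_j(∑ a(i) x^i) = ∑ a(p i + j)^{1/p} x^i`. -/
noncomputable def cartierOp {n : ℕ} {K : Type*} [Field K] (p : ℕ) [ExpChar K p]
    [PerfectRing K p] (j : Fin n →₀ ℕ) (f : MvPowerSeries (Fin n) K) :
    MvPowerSeries (Fin n) K :=
  fun i => (frobeniusEquiv K p).symm (MvPowerSeries.coeff (p • i + j) f)

/-- The diagonal `Δ(f)(t) = ∑ a(m,…,m) t^m` of a multivariate power series. -/
noncomputable def diagonal {n : ℕ} {K : Type*} [CommSemiring K]
    (f : MvPowerSeries (Fin n) K) : PowerSeries K :=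
  PowerSeries.mk fun m =>
    MvPowerSeries.coeff (Finsupp.equivFunOnFinite.symm fun _ => m) f

open Polynomial PowerSeries Submodule Module

theorem Submodule.pow_expChar_pow_mem_span {R A : Type*} [CommSemiring R] [CommSemiring A]
    [Algebra R A] (p : ℕ) [ExpChar A p] (k : ℕ) {s : Set A} {x : A} (hx : x ∈ span R s) :
    x ^ p ^ k ∈ span R ((· ^ p ^ k) '' s) := by
  induction hx using Submodule.span_induction with
  | mem y hy => exact subset_span ⟨y, hy, rfl⟩
  | zero => rw [zero_pow (expChar_pow_pos A p k).ne']; exact zero_mem _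
  | add y z _ _ hy hz => rw [add_pow_expChar_pow]; exact add_mem hy hz
  | smul a y _ hy => rw [_root_.smul_pow]; exact smul_mem _ _ hy

theorem Polynomial.exists_aeval_eq_zero_of_not_linearIndependent {R A : Type*} [CommRing R]
    [CommRing A] [Algebra R A] {ι : Type*} [Fintype ι] {e : ι → ℕ} (he : e.Injective) {N : ℕ}
    (hN : ∀ i, e i ≤ N) {x : A} (h : ¬LinearIndependent R fun i => x ^ e i) :
    ∃ P : R[X], P ≠ 0 ∧ P.natDegree ≤ N ∧ aeval x P = 0 := by
  classical
  obtain ⟨c, hc, i₀, hi₀⟩ := Fintype.not_linearIndependent_iff.1 h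
  refine ⟨∑ i, monomial (e i) (c i), fun hP => hi₀ ?_, ?_, ?_⟩
  · simpa [finsetSum_coeff, coeff_monomial, he.eq_iff] using congr_arg (coeff · (e i₀)) hP
  · exact natDegree_sum_le_of_forall_le _ _ fun i _ => (natDegree_monomial_le _).trans (hN i)
  · simpa [aeval_monomial, Algebra.smul_def] using hc

namespace PowerSeries

theorem algebraMap_polynomial_eq_coeToPowerSeries {R : Type*} [CommSemiring R] :
    algebraMap R[X] R⟦X⟧ = coeToPowerSeries.ringHom :=
  RingHom.ext fun q => by
    rw [algebraMap_apply', Algebra.algebraMap_self, map_id]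
    rfl

instance instExpChar {R : Type*} [CommRing R] (p : ℕ) [ExpChar R p] : ExpChar R⟦X⟧ p :=
  expChar_of_injective_ringHom C_injective p

section CommRing

variable {R : Type*} [CommRing R] (p : ℕ) [ExpChar R p]

theorem map_frobenius_expand (g : R⟦X⟧) :
    map (frobenius R p) (expand p (expChar_ne_zero R p) g) = g ^ p :=
  MvPowerSeries.map_frobenius_expand p _

theorem coeff_pow_expChar (g : R⟦X⟧) (m : ℕ) :
    coeff m (g ^ p) = if p ∣ m then coeff (m / p) g ^ p else 0 := by
  rw [← map_frobenius_expand, coeff_map, coeff_expand, apply_ite (frobenius R p), map_zero,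
    frobenius_def]

end CommRing

variable {K : Type*} [Field K] (p : ℕ) [ExpChar K p] [PerfectRing K p]

noncomputable def cartier (j : ℕ) (g : K⟦X⟧) : K⟦X⟧ :=
  mk fun m => (frobeniusEquiv K p).symm (coeff (p * m + j) g)

theorem sum_cartier_pow_mul_X_pow (g : K⟦X⟧) :
    ∑ j ∈ Finset.range p, cartier p j g ^ p * X ^ j = g := by
  have hp : 0 < p := expChar_pos K p
  ext m
  rw [map_sum, Finset.sum_eq_single_of_mem (m % p) (Finset.mem_range.mpr (Nat.mod_lt m hp))]
  · rw [coeff_mul_X_pow', if_pos (Nat.mod_le m p), coeff_pow_expChar,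
      if_pos (Nat.dvd_sub_mod m), cartier, coeff_mk, frobeniusEquiv_symm_pow_p,
      ← Nat.div_eq_sub_mod_div, Nat.div_add_mod]
  · intro j hj hne
    rw [coeff_mul_X_pow']
    split_ifs with hle
    · rw [coeff_pow_expChar, if_neg]
      rintro ⟨k, hk⟩
      apply hne
      have hjm : m = p * k + j := by omega
      rw [hjm, Nat.mul_add_mod, Nat.mod_eq_of_lt (Finset.mem_range.mp hj)]
    · rfl

theorem pow_mem_span_pow_succ {D : Submodule K K⟦X⟧}
    (hD : ∀ j < p, ∀ g ∈ D, cartier p j g ∈ D) (k : ℕ) {g : K⟦X⟧} (hg : g ∈ D) :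
    g ^ p ^ k ∈ span K[X] ((· ^ p ^ (k + 1)) '' (D : Set K⟦X⟧)) := by
  have hsplit : g ^ p ^ k = ∑ j ∈ Finset.range p,
      (Polynomial.X ^ (j * p ^ k) : K[X]) • cartier p j g ^ p ^ (k + 1) := by
    conv_lhs => rw [← sum_cartier_pow_mul_X_pow p g]
    rw [sum_pow_char_pow]
    refine Finset.sum_congr rfl fun j _ => ?_
    rw [Algebra.smul_def, algebraMap_polynomial_eq_coeToPowerSeries, map_pow,
      coeToPowerSeries.ringHom_apply, Polynomial.coe_X]
    ring
  rw [hsplit]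
  exact sum_mem fun j hj =>
    smul_mem _ _ (subset_span ⟨_, hD j (Finset.mem_range.1 hj) g hg, rfl⟩)

theorem pow_mem_span_pow_of_le {D : Submodule K K⟦X⟧}
    (hD : ∀ j < p, ∀ g ∈ D, cartier p j g ∈ D) {g : K⟦X⟧} (hg : g ∈ D) {i m : ℕ} (him : i ≤ m) :
    g ^ p ^ i ∈ span K[X] ((· ^ p ^ m) '' (D : Set K⟦X⟧)) := by
  induction m, him using Nat.le_induction with
  | base => exact subset_span ⟨g, hg, rfl⟩
  | succ m _ ih =>
    refine span_le.2 ?_ ih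
    rintro _ ⟨h, hh, rfl⟩
    exact pow_mem_span_pow_succ p hD m hh

theorem exists_aeval_eq_zero_of_cartier_invariant (hp : 1 < p) (D : Submodule K K⟦X⟧)
    [FiniteDimensional K D] (hD : ∀ j < p, ∀ g ∈ D, cartier p j g ∈ D) {g : K⟦X⟧} (hg : g ∈ D) :
    ∃ P : K[X][X], P ≠ 0 ∧ P.natDegree ≤ p ^ finrank K D ∧ Polynomial.aeval g P = 0 := by
  classical
  set d := finrank K D
  let b := Module.finBasis K D
  set w : Fin d → K⟦X⟧ := fun j => (b j : K⟦X⟧) ^ p ^ d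
  have hD_span : span K (Set.range fun j => (b j : K⟦X⟧)) = D := by
    rw [Set.range_comp', ← D.coe_subtype, ← map_span, b.span_eq, map_subtype_top]
  have hmem : ∀ i : Fin (d + 1), g ^ p ^ (i : ℕ) ∈ span K[X] (Set.range w) := by
    intro i
    refine span_le.2 ?_ (pow_mem_span_pow_of_le p hD hg i.is_le)
    rintro _ ⟨h, hh, rfl⟩
    have := pow_expChar_pow_mem_span (R := K) p d (hD_span ▸ hh)
    rw [← Set.range_comp] at this
    exact span_le_restrictScalars K K[X] _ this
  refine exists_aeval_eq_zero_of_not_linearIndependent (fun i j hij => Fin.ext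
    (Nat.pow_right_injective hp hij)) (fun i => Nat.pow_le_pow_right (by omega) i.is_le) ?_
  intro hli
  have hcard := linearIndependent_le_span' _ hli (Set.range w) (Set.range_subset_iff.2 hmem)
  rw [Cardinal.mk_fintype, Fintype.card_fin, Nat.cast_le] at hcard
  have := hcard.trans ((Fintype.card_range_le w).trans_eq (Fintype.card_fin d))
  omega

end PowerSeries

section Diagonal

variable {n : ℕ} {K : Type*}

noncomputable def diagonalLinearMap [CommSemiring K] : MvPowerSeries (Fin n) K →ₗ[K] K⟦X⟧ where
  toFun := diagonal
  map_add' f g := by ext m; simp [diagonal]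
  map_smul' a f := by ext m; simp [diagonal]

variable [Field K] (p : ℕ) [ExpChar K p] [PerfectRing K p]

theorem diagonal_cartierOp_const (j : ℕ) (f : MvPowerSeries (Fin n) K) :
    diagonal (cartierOp p (Finsupp.equivFunOnFinite.symm fun _ => j) f) =
      cartier p j (diagonal f) := by
  ext m
  have hidx : p • (Finsupp.equivFunOnFinite.symm fun _ : Fin n => m) +
      Finsupp.equivFunOnFinite.symm (fun _ => j) =
      Finsupp.equivFunOnFinite.symm fun _ => p * m + j := by
    ext k
    simp
  simp [diagonal, cartier, cartierOp, MvPowerSeries.coeff_apply, hidx]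

theorem cartier_mem_map_diagonal {W : Submodule K (MvPowerSeries (Fin n) K)}
    (hW : ∀ j : Fin n →₀ ℕ, (∀ k, j k < p) → ∀ f ∈ W, cartierOp p j f ∈ W) :
    ∀ j < p, ∀ g ∈ W.map diagonalLinearMap, cartier p j g ∈ W.map diagonalLinearMap := by
  rintro j hj _ ⟨f, hf, rfl⟩
  change cartier p j (diagonal f) ∈ _
  rw [← diagonal_cartierOp_const]
  exact mem_map_of_mem (hW _ (fun _ => hj) f hf)

end Diagonal

/-- Proposition 5.1: if `W ⊆ K[[x_1,…,x_n]]` is a `K`-vector space of dimension `d`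
invariant under all Cartier operators, then the diagonal of any `f ∈ W` is algebraic
over `K(x)` of degree at most `p^d`. -/
theorem diagonal_algebraic_of_cartier_invariant {n : ℕ} (K : Type*) [Field K]
    (p : ℕ) (hp : p.Prime) [ExpChar K p] [PerfectRing K p] (d : ℕ)
    (W : Submodule K (MvPowerSeries (Fin n) K))
    (hfin : Module.Finite K W) (hdim : Module.finrank K W = d)
    (hinv : ∀ j : Fin n →₀ ℕ, (∀ k, j k < p) → ∀ f ∈ W, cartierOp p j f ∈ W) :
    ∀ f ∈ W, ∃ P : Polynomial (Polynomial K), P ≠ 0 ∧ P.natDegree ≤ p ^ d ∧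
      Polynomial.eval₂ Polynomial.coeToPowerSeries.ringHom (diagonal f) P = 0 := by
  intro f hf
  obtain ⟨P, hP, hdeg, hroot⟩ := exists_aeval_eq_zero_of_cartier_invariant p hp.one_lt
    (W.map diagonalLinearMap) (cartier_mem_map_diagonal p hinv) (mem_map_of_mem hf)
  have hrank : finrank K (W.map diagonalLinearMap) ≤ d := hdim ▸ finrank_map_le _ _
  refine ⟨P, hP, hdeg.trans (Nat.pow_le_pow_right hp.pos hrank), ?_⟩
  rwa [aeval_def, algebraMap_polynomial_eq_coeToPowerSeries] at hroot
end

section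
/- Let K be a field, let f ∈ K[[x]] be a power series with f(0) = 0, and let P(x,y) ∈ K[x,y] satisfy P(x, f(x)) = 0 and ∂P/∂y(0,0) ≠ 0. Then the rational function R(x,y) = y²·(∂P/∂y)(xy, y)/P(xy, y) belongs to K[[x,y]] and its diagonal equals f, i.e. Δ(R) = f. -/
/-- The diagonal of a two-variable power series: `Δ(∑ r(i,j) x^i y^j)(t) = ∑ r(n,n) t^n`. -/
noncomputable def diagonal2 {K : Type*} [CommSemiring K]
    (R : MvPowerSeries (Fin 2) K) : PowerSeries K :=
  PowerSeries.mk fun m =>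
    MvPowerSeries.coeff (Finsupp.equivFunOnFinite.symm fun _ => m) R

/-!
View `P` as a polynomial in `y` over `K[[x]]`; since `f` is a root, `P = (y - f) q`. Writing
`f = x h`, the substitution `(x, y) ↦ (xy, y)` turns `y - f` into `y (1 - g)` with `g = x h(xy)`, so
`R = y/(1 - g) + y² q_y(xy, y)/q(xy, y)`, where `q(xy, y)` is invertible because its constant term
is `∂P/∂y(0,0)`. Every monomial of a series in `x y` and `y` has `y`-degree at least its
`x`-degree, so the second summand has no diagonal terms. In `y/(1 - g) = y + y g + y g²/(1 - g)`
the first term is off the diagonal, `y g = f(xy)` has diagonal `f`, and the last term has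
`x`-degree larger than `y`-degree in every monomial.
-/

open MvPowerSeries

noncomputable section

namespace Furstenberg

section Weight

variable {σ R : Type*}

def WeightGE [Semiring R] (w : (σ →₀ ℕ) →+ ℤ) (k : ℤ) (A : MvPowerSeries σ R) : Prop :=
  ∀ d, coeff d A ≠ 0 → k ≤ w d

variable {w : (σ →₀ ℕ) →+ ℤ} {k l : ℤ}

section Semiring

variable [Semiring R] {A B : MvPowerSeries σ R}

lemma WeightGE.coeff_eq_zero (hA : WeightGE w k A) {d : σ →₀ ℕ} (hd : w d < k) :
    coeff d A = 0 :=
  not_imp_comm.mp (hA d) hd.not_ge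

lemma WeightGE.mono (hA : WeightGE w k A) (hlk : l ≤ k) : WeightGE w l A :=
  fun d hd => hlk.trans (hA d hd)

lemma WeightGE.add (hA : WeightGE w k A) (hB : WeightGE w k B) : WeightGE w k (A + B) := by
  intro d hd
  by_contra! hlt
  exact hd (by rw [map_add, hA.coeff_eq_zero hlt, hB.coeff_eq_zero hlt, add_zero])

lemma WeightGE.mul (hA : WeightGE w k A) (hB : WeightGE w l B) :
    WeightGE w (k + l) (A * B) := by
  classical
  intro d hd
  rw [coeff_mul] at hd
  obtain ⟨x, hx, hne⟩ := Finset.exists_ne_zero_of_sum_ne_zero hd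
  rw [← Finset.HasAntidiagonal.mem_antidiagonal.mp hx, map_add]
  exact add_le_add (hA _ (left_ne_zero_of_mul hne)) (hB _ (right_ne_zero_of_mul hne))

lemma weightGE_one : WeightGE w 0 (1 : MvPowerSeries σ R) := by
  classical
  intro d hd
  rw [coeff_one] at hd
  rw [(ite_ne_right_iff.mp hd).1, map_zero]

lemma WeightGE.pow (hA : WeightGE w k A) (n : ℕ) : WeightGE w (n * k) (A ^ n) := by
  induction n with
  | zero => simpa using weightGE_one
  | succ n ih => simpa [pow_succ, add_mul] using ih.mul hA

lemma weightGE_X (i : σ) : WeightGE w (w (Finsupp.single i 1)) (X i : MvPowerSeries σ R) := by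
  classical
  intro d hd
  rw [coeff_X] at hd
  rw [(ite_ne_right_iff.mp hd).1]

end Semiring

lemma WeightGE.sub [Ring R] {A B : MvPowerSeries σ R} (hA : WeightGE w k A)
    (hB : WeightGE w k B) : WeightGE w k (A - B) := by
  intro d hd
  by_contra! hlt
  exact hd (by rw [map_sub, hA.coeff_eq_zero hlt, hB.coeff_eq_zero hlt, sub_zero])

lemma WeightGE.inv [Field R] {A : MvPowerSeries σ R} (hA : WeightGE w 0 A) :
    WeightGE w 0 A⁻¹ := by
  classical
  intro d
  induction d using WellFoundedLT.induction with
  | _ d ih =>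
  intro hd
  rw [coeff_inv] at hd
  split_ifs at hd with hd0
  · rw [hd0, map_zero]
  obtain ⟨x, hx, hne⟩ := Finset.exists_ne_zero_of_sum_ne_zero (right_ne_zero_of_mul hd)
  obtain ⟨hlt, hne⟩ := ite_ne_right_iff.mp hne
  rw [← Finset.HasAntidiagonal.mem_antidiagonal.mp hx, map_add]
  exact add_nonneg (hA _ (left_ne_zero_of_mul hne)) (ih _ hlt (right_ne_zero_of_mul hne))

end Weight

abbrev diagExp (m : ℕ) : Fin 2 →₀ ℕ := Finsupp.equivFunOnFinite.symm fun _ => m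

lemma eq_diagExp_iff {d : Fin 2 →₀ ℕ} {m : ℕ} : d = diagExp m ↔ d 0 = m ∧ d 1 = m := by
  rw [← Finsupp.equivFunOnFinite.injective.eq_iff, Equiv.apply_symm_apply, funext_iff,
    Fin.forall_fin_two]
  rfl

lemma coeff_diagonal2 {R : Type*} [CommSemiring R] (A : MvPowerSeries (Fin 2) R) (n : ℕ) :
    PowerSeries.coeff n (diagonal2 A) = coeff (diagExp n) A :=
  PowerSeries.coeff_mk _ _

lemma diagonal2_add {R : Type*} [CommSemiring R] (A B : MvPowerSeries (Fin 2) R) :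
    diagonal2 (A + B) = diagonal2 A + diagonal2 B := by
  ext n
  simp only [map_add, coeff_diagonal2]

lemma diagonal2_eq_zero_of_weightGE {R : Type*} [CommSemiring R] {w : (Fin 2 →₀ ℕ) →+ ℤ}
    (hw : ∀ n, w (diagExp n) = 0) {k : ℤ} (hk : 0 < k) {A : MvPowerSeries (Fin 2) R}
    (hA : WeightGE w k A) : diagonal2 A = 0 := by
  ext n
  rw [coeff_diagonal2, hA.coeff_eq_zero (by rw [hw]; exact hk), map_zero]

def yxWeight : (Fin 2 →₀ ℕ) →+ ℤ :=
  (Nat.castAddMonoidHom ℤ).comp (Finsupp.applyAddHom 1) -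
    (Nat.castAddMonoidHom ℤ).comp (Finsupp.applyAddHom 0)

@[simp] lemma yxWeight_apply (d : Fin 2 →₀ ℕ) : yxWeight d = (d 1 : ℤ) - d 0 := rfl

lemma yxWeight_diagExp (n : ℕ) : yxWeight (diagExp n) = 0 := by simp

lemma neg_yxWeight_diagExp (n : ℕ) : (-yxWeight) (diagExp n) = 0 := by simp

variable {R : Type*} [CommRing R]

lemma X_zero_mul_X_one_pow (n : ℕ) :
    (X 0 * X 1 : MvPowerSeries (Fin 2) R) ^ n = monomial (diagExp n) 1 := by
  rw [X, X, monomial_mul_monomial, one_mul, monomial_pow, one_pow]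
  refine congrArg (monomial · 1) (Finsupp.ext fun i => ?_)
  fin_cases i <;> simp

lemma hasSubst_X_zero_mul_X_one : PowerSeries.HasSubst (X 0 * X 1 : MvPowerSeries (Fin 2) R) :=
  PowerSeries.HasSubst.of_constantCoeff_zero (by simp)

/-- `a(x) ↦ a(xy)` -/
def substXY : PowerSeries R →+* MvPowerSeries (Fin 2) R :=
  (PowerSeries.substAlgHom hasSubst_X_zero_mul_X_one).toRingHom

lemma coeff_substXY (a : PowerSeries R) (d : Fin 2 →₀ ℕ) :
    coeff d (substXY a) = if d 0 = d 1 then PowerSeries.coeff (d 0) a else 0 := by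
  classical
  rw [substXY, AlgHom.toRingHom_eq_coe, RingHom.coe_coe, PowerSeries.coe_substAlgHom,
    PowerSeries.coeff_subst hasSubst_X_zero_mul_X_one]
  simp_rw [X_zero_mul_X_one_pow, coeff_monomial, eq_diagExp_iff, smul_eq_mul, mul_ite, mul_one,
    mul_zero]
  split_ifs with h
  · rw [finsum_eq_single _ (d 0) (fun n hn => if_neg (by omega)), if_pos ⟨rfl, h.symm⟩]
  · exact finsum_eq_zero_of_forall_eq_zero fun n => if_neg (by omega)

lemma substXY_X : substXY PowerSeries.X = (X 0 * X 1 : MvPowerSeries (Fin 2) R) :=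
  PowerSeries.substAlgHom_X _

lemma substXY_C (r : R) : substXY (PowerSeries.C r) = C r :=
  (PowerSeries.substAlgHom hasSubst_X_zero_mul_X_one).commutes r

lemma diagonal2_substXY (a : PowerSeries R) : diagonal2 (substXY a) = a := by
  ext n
  simp [coeff_diagonal2, coeff_substXY]

lemma weightGE_substXY {w : (Fin 2 →₀ ℕ) →+ ℤ} (hw : ∀ n, w (diagExp n) = 0)
    (a : PowerSeries R) : WeightGE w 0 (substXY a) := by
  intro d hd
  rw [coeff_substXY] at hd
  rw [eq_diagExp_iff.mpr ⟨rfl, (ite_ne_right_iff.mp hd).1.symm⟩, hw]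

/-- `p(x, y) ↦ p(xy, y)` -/
def evalShear : Polynomial (PowerSeries R) →+* MvPowerSeries (Fin 2) R :=
  Polynomial.eval₂RingHom substXY (X 1)

lemma weightGE_evalShear (p : Polynomial (PowerSeries R)) :
    WeightGE yxWeight 0 (evalShear p) := by
  induction p using Polynomial.induction_on' with
  | add p q hp hq => rw [map_add]; exact hp.add hq
  | monomial n a =>
    rw [evalShear, Polynomial.coe_eval₂RingHom, Polynomial.eval₂_monomial]
    have hXn : WeightGE yxWeight 0 (X 1 ^ n : MvPowerSeries (Fin 2) R) :=
      ((weightGE_X 1).pow n).mono (by simp)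
    simpa using (weightGE_substXY yxWeight_diagExp a).mul hXn

/-- `P(x, y)` as a polynomial in `y` over `R[[x]]` -/
def toPolyY : MvPolynomial (Fin 2) R →+* Polynomial (PowerSeries R) :=
  MvPolynomial.eval₂Hom (Polynomial.C.comp PowerSeries.C)
    ![Polynomial.C PowerSeries.X, Polynomial.X]

lemma eval_toPolyY (f : PowerSeries R) (P : MvPolynomial (Fin 2) R) :
    (toPolyY P).eval f = MvPolynomial.aeval ![PowerSeries.X, f] P := by
  rw [← Polynomial.coe_evalRingHom, toPolyY, MvPolynomial.coe_eval₂Hom,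
    MvPolynomial.eval₂_comp_left, MvPolynomial.aeval_def]
  congr 1
  · ext r; simp
  · funext i; fin_cases i <;> simp

lemma toPolyY_X (i : Fin 2) :
    toPolyY (MvPolynomial.X i : MvPolynomial (Fin 2) R) =
      ![Polynomial.C PowerSeries.X, Polynomial.X] i :=
  MvPolynomial.eval₂Hom_X' _ _ i

lemma toPolyY_pderiv_one (P : MvPolynomial (Fin 2) R) :
    toPolyY (MvPolynomial.pderiv 1 P) = (toPolyY P).derivative := by
  induction P using MvPolynomial.induction_on with
  | C a => simp [toPolyY]
  | add p q hp hq => simp only [map_add, hp, hq]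
  | mul_X p i hp =>
    fin_cases i <;> simp [toPolyY_X, hp, Polynomial.derivative_mul, mul_comm]

lemma evalShear_toPolyY (P : MvPolynomial (Fin 2) R) :
    evalShear (toPolyY P) = MvPolynomial.aeval ![X 0 * X 1, X 1] P := by
  rw [toPolyY, MvPolynomial.coe_eval₂Hom, MvPolynomial.eval₂_comp_left, MvPolynomial.aeval_def]
  congr 1
  · exact RingHom.ext fun r => by simp [evalShear, substXY_C, c_eq_algebraMap]
  · funext i; fin_cases i <;> simp [evalShear, substXY_X]

lemma constantCoeff_aeval_shear (P : MvPolynomial (Fin 2) R) :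
    constantCoeff (MvPolynomial.aeval ![(X 0 * X 1 : MvPowerSeries (Fin 2) R), X 1] P) =
      MvPolynomial.eval (fun _ => 0) P := by
  rw [MvPolynomial.aeval_def, MvPolynomial.eval₂_comp_left]
  congr 1
  funext i; fin_cases i <;> simp

lemma evalShear_X_sub_C_X_mul (h : PowerSeries R) :
    evalShear (Polynomial.X - Polynomial.C (PowerSeries.X * h)) = X 1 * (1 - X 0 * substXY h) := by
  rw [evalShear, Polynomial.coe_eval₂RingHom, Polynomial.eval₂_sub, Polynomial.eval₂_X,
    Polynomial.eval₂_C, map_mul, substXY_X]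
  ring

section Field

variable {K : Type*} [Field K]

lemma diagonal2_X_one_sq_mul_evalShear_mul_inv (p q : Polynomial (PowerSeries K)) :
    diagonal2 (X 1 ^ 2 * evalShear p * (evalShear q)⁻¹) = 0 := by
  refine diagonal2_eq_zero_of_weightGE yxWeight_diagExp two_pos ?_
  simpa using (((weightGE_X 1).pow 2).mul (weightGE_evalShear p)).mul
    (weightGE_evalShear q).inv

lemma diagonal2_X_one_mul_inv_one_sub (h : PowerSeries K) :
    diagonal2 (X 1 * (1 - X 0 * substXY h)⁻¹) = PowerSeries.X * h := by
  set g : MvPowerSeries (Fin 2) K := X 0 * substXY h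
  have hg : WeightGE (-yxWeight) 1 g := by
    simpa using (weightGE_X 0).mul (weightGE_substXY neg_yxWeight_diagExp h)
  have hinv : (1 - g) * (1 - g)⁻¹ = 1 := MvPowerSeries.mul_inv_cancel _ (by simp [g])
  have hsplit : X 1 * (1 - g)⁻¹ =
      X 1 + substXY (PowerSeries.X * h) + X 1 * g ^ 2 * (1 - g)⁻¹ := by
    rw [map_mul, substXY_X]
    linear_combination (X 1 * (1 + g)) * hinv
  have hX1 : WeightGE yxWeight 1 (X 1 : MvPowerSeries (Fin 2) K) := by
    simpa using weightGE_X (w := yxWeight) 1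
  have htail : WeightGE (-yxWeight) 1 (X 1 * g ^ 2 * (1 - g)⁻¹) := by
    simpa using ((weightGE_X 1).mul (hg.pow 2)).mul (weightGE_one.sub (hg.mono zero_le_one)).inv
  rw [hsplit, diagonal2_add, diagonal2_add, diagonal2_substXY,
    diagonal2_eq_zero_of_weightGE yxWeight_diagExp one_pos hX1,
    diagonal2_eq_zero_of_weightGE neg_yxWeight_diagExp one_pos htail, zero_add, add_zero]

end Field

end Furstenberg

open Furstenberg

/-- Furstenberg's formula (Proposition 3.1): if `f ∈ K[[x]]` has no constant term,
`P(x, f) = 0` and `∂P/∂y(0,0) ≠ 0`, then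
`R(x,y) = y²·(∂P/∂y)(xy,y)/P(xy,y)` is a power series in `K[[x,y]]` with `Δ(R) = f`.
(Here the variable `0` is `x` and the variable `1` is `y`.) -/
theorem furstenberg_formula (K : Type*) [Field K] (f : PowerSeries K)
    (hf0 : PowerSeries.constantCoeff f = 0)
    (P : MvPolynomial (Fin 2) K)
    (hPf : MvPolynomial.aeval ![PowerSeries.X, f] P = 0)
    (hPy : MvPolynomial.eval (fun _ => (0 : K)) (MvPolynomial.pderiv 1 P) ≠ 0) :
    ∃ R : MvPowerSeries (Fin 2) K,
      R * MvPolynomial.aeval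
          ![MvPowerSeries.X (0 : Fin 2) * MvPowerSeries.X 1, MvPowerSeries.X 1] P =
        (MvPowerSeries.X (1 : Fin 2)) ^ 2 *
          MvPolynomial.aeval
            ![MvPowerSeries.X (0 : Fin 2) * MvPowerSeries.X 1, MvPowerSeries.X 1]
            (MvPolynomial.pderiv 1 P) ∧
      diagonal2 R = f := by
  obtain ⟨q, hq⟩ : Polynomial.X - Polynomial.C f ∣ toPolyY P :=
    Polynomial.dvd_iff_isRoot.mpr (by rw [Polynomial.IsRoot, eval_toPolyY, hPf])
  obtain ⟨h, rfl⟩ := PowerSeries.X_dvd_iff.mpr hf0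
  set g : MvPowerSeries (Fin 2) K := X 0 * substXY h
  have hP : MvPolynomial.aeval ![X 0 * X 1, X 1] P = X 1 * (1 - g) * evalShear q := by
    rw [← evalShear_toPolyY, hq, map_mul, evalShear_X_sub_C_X_mul]
  have hP' : MvPolynomial.aeval ![X 0 * X 1, X 1] (MvPolynomial.pderiv 1 P) =
      evalShear q + X 1 * (1 - g) * evalShear q.derivative := by
    rw [← evalShear_toPolyY, toPolyY_pderiv_one, hq, Polynomial.derivative_mul,
      Polynomial.derivative_sub, Polynomial.derivative_X, Polynomial.derivative_C, sub_zero,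
      one_mul, map_add, map_mul, evalShear_X_sub_C_X_mul]
  have hq0 : constantCoeff (evalShear q) ≠ 0 := by
    have hc := constantCoeff_aeval_shear (MvPolynomial.pderiv 1 P)
    simp only [hP', map_add, map_mul, constantCoeff_X, zero_mul, add_zero] at hc
    exact hc ▸ hPy
  have hg0 : (1 - g) * (1 - g)⁻¹ = 1 := MvPowerSeries.mul_inv_cancel _ (by simp [g])
  have hq1 : evalShear q * (evalShear q)⁻¹ = 1 := MvPowerSeries.mul_inv_cancel _ hq0
  refine ⟨X 1 * (1 - g)⁻¹ + X 1 ^ 2 * evalShear q.derivative * (evalShear q)⁻¹, ?_, ?_⟩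
  · rw [hP, hP']
    linear_combination (X 1 ^ 2 * evalShear q) * hg0 +
      (X 1 ^ 3 * (1 - g) * evalShear q.derivative) * hq1
  · rw [diagonal2_add, diagonal2_X_one_mul_inv_one_sub,
      diagonal2_X_one_sq_mul_evalShear_mul_inv, add_zero]
end
end

section
/- For every prime p and all nonnegative integers n and j with j < p, the central binomial coefficient satisfies binomial(2(pn+j), pn+j) ≡ binomial(2n,n)·binomial(2j,j) (mod p). In other words, the sequence binomial(2n,n) has the Lucas property. -/
/-- The central binomial coefficients have the Lucas property:
`binomial(2(pn+j), pn+j) ≡ binomial(2n,n)·binomial(2j,j) (mod p)` for `p` prime, `j < p`. -/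
theorem central_binomial_lucas (p : ℕ) (hp : p.Prime) (n j : ℕ) (hj : j < p) :
    (Nat.choose (2 * (p * n + j)) (p * n + j) : ℤ) ≡
      (Nat.choose (2 * n) n : ℤ) * (Nat.choose (2 * j) j : ℤ) [ZMOD p] := by
  haveI : Fact p.Prime := ⟨hp⟩
  have hp0 : 0 < p := hp.pos
  have h1 := @Choose.choose_modEq_choose_mod_mul_choose_div (2 * (p * n + j)) (p * n + j) p _
  have hKmod : (p * n + j) % p = j := by
    rw [Nat.mul_add_mod, Nat.mod_eq_of_lt hj]
  have hKdiv : (p * n + j) / p = n := by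
    rw [Nat.mul_add_div hp0, Nat.div_eq_of_lt hj, add_zero]
  rw [hKmod, hKdiv] at h1
  have hNdecomp : 2 * (p * n + j) = p * (2 * n) + 2 * j := by ring
  rcases lt_or_ge (2 * j) p with h2j | h2j
  · have hNmod : (2 * (p * n + j)) % p = 2 * j := by
      rw [hNdecomp, Nat.mul_add_mod, Nat.mod_eq_of_lt h2j]
    have hNdiv : (2 * (p * n + j)) / p = 2 * n := by
      rw [hNdecomp, Nat.mul_add_div hp0, Nat.div_eq_of_lt h2j, add_zero]
    rw [hNmod, hNdiv] at h1
    calc (Nat.choose (2 * (p * n + j)) (p * n + j) : ℤ)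
        ≡ (Nat.choose (2 * j) j : ℤ) * (Nat.choose (2 * n) n : ℤ) [ZMOD p] := by
          exact_mod_cast h1
      _ = (Nat.choose (2 * n) n : ℤ) * (Nat.choose (2 * j) j : ℤ) := mul_comm _ _
  · -- here 2j ≥ p, both sides ≡ 0
    have hlt : 2 * j - p < j := by omega
    have hz : Nat.choose (2 * j - p) j = 0 := Nat.choose_eq_zero_of_lt hlt
    have hNmod : (2 * (p * n + j)) % p = 2 * j - p := by
      rw [hNdecomp, Nat.mul_add_mod, Nat.mod_eq_sub_mod h2j,
        Nat.mod_eq_of_lt (by omega)]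
    rw [hNmod, hz] at h1
    simp only [Nat.cast_zero, zero_mul, Nat.cast_mul] at h1
    -- RHS: choose (2j) j ≡ 0 mod p
    have h2 := @Choose.choose_modEq_choose_mod_mul_choose_div (2 * j) j p _
    have : (2 * j) % p = 2 * j - p := by
      rw [Nat.mod_eq_sub_mod h2j, Nat.mod_eq_of_lt (by omega)]
    rw [this, Nat.mod_eq_of_lt hj, hz] at h2
    simp only [Nat.cast_zero, zero_mul] at h2
    calc (Nat.choose (2 * (p * n + j)) (p * n + j) : ℤ)
        ≡ 0 [ZMOD p] := by exact_mod_cast h1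
      _ ≡ (Nat.choose (2 * n) n : ℤ) * (Nat.choose (2 * j) j : ℤ) [ZMOD p] := by
          have : (Nat.choose (2 * j) j : ℤ) ≡ 0 [ZMOD p] := by exact_mod_cast h2
          calc (0 : ℤ) = (Nat.choose (2 * n) n : ℤ) * 0 := by ring
            _ ≡ (Nat.choose (2 * n) n : ℤ) * (Nat.choose (2 * j) j : ℤ) [ZMOD p] :=
              (Int.ModEq.mul_left _ this.symm)
end

section
/- Let r ≥ 1. For every prime p and all nonnegative integers n and j with j < p, the central multinomial coefficient (rn)!/(n!)^r satisfies (r(pn+j))!/((pn+j)!)^r ≡ ((rn)!/(n!)^r)·((rj)!/(j!)^r) (mod p). That is, the sequence n ↦ (rn)!/(n!)^r has the Lucas property. -/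
open Finset MvPolynomial

private lemma prod_X_pow_eq_monomial' {σ R : Type*} [Fintype σ] [DecidableEq σ] [CommSemiring R]
    (k : σ → ℕ) :
    (∏ i : σ, (X i : MvPolynomial σ R) ^ k i) =
      monomial (Finsupp.equivFunOnFinite.symm k) 1 := by
  set s : σ →₀ ℕ := Finsupp.equivFunOnFinite.symm k with hs
  have hk : ∀ i, k i = s i := fun i => rfl
  rw [← prod_X_pow_eq_monomial]
  simp_rw [hk]
  exact (Finset.prod_subset (Finset.subset_univ _) (fun i _ hi => by
    rw [Finsupp.notMem_support_iff] at hi; rw [hi, pow_zero])).symm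

private lemma expand_sum_pow {σ R : Type*} [Fintype σ] [DecidableEq σ] [CommSemiring R]
    (a N : ℕ) :
    ((∑ i : σ, (X i : MvPolynomial σ R) ^ a) ^ N) =
      ∑ k ∈ piAntidiag (univ : Finset σ) N,
        (Nat.multinomial univ k : MvPolynomial σ R) *
          monomial (Finsupp.equivFunOnFinite.symm fun i => a * k i) 1 := by
  rw [Finset.sum_pow_eq_sum_piAntidiag]
  refine Finset.sum_congr rfl fun k hk => ?_
  rw [← prod_X_pow_eq_monomial']
  congr 1
  exact Finset.prod_congr rfl fun i _ => by rw [← pow_mul]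

private lemma coeff_sum_monomial {σ R ι : Type*} [DecidableEq σ] [CommSemiring R] (S : Finset ι)
    (c : ι → ℕ) (e : ι → (σ →₀ ℕ)) (d : σ →₀ ℕ) :
    MvPolynomial.coeff d (∑ k ∈ S, (c k : MvPolynomial σ R) * monomial (e k) 1) =
      ∑ k ∈ S, if e k = d then (c k : R) else 0 := by
  rw [MvPolynomial.coeff_sum]
  refine Finset.sum_congr rfl fun k _ => ?_
  rw [← map_natCast (C : R →+* MvPolynomial σ R), coeff_C_mul, coeff_monomial]
  split_ifs <;> simp

/-- The central multinomial coefficients `(rn)!/(n!)^r` have the Lucas property: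
for `r ≥ 1`, `p` prime and `j < p`,
`(r(pn+j))!/((pn+j)!)^r ≡ ((rn)!/(n!)^r)·((rj)!/(j!)^r) (mod p)`. -/
theorem central_multinomial_lucas (r : ℕ) (hr : 1 ≤ r) (p : ℕ) (hp : p.Prime)
    (n j : ℕ) (hj : j < p) :
    (Nat.multinomial (Finset.univ : Finset (Fin r)) (fun _ => p * n + j) : ℤ) ≡
      (Nat.multinomial (Finset.univ : Finset (Fin r)) (fun _ => n) : ℤ) *
        (Nat.multinomial (Finset.univ : Finset (Fin r)) (fun _ => j) : ℤ) [ZMOD p] := by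
  haveI : Fact p.Prime := ⟨hp⟩
  rw [← ZMod.intCast_eq_intCast_iff]
  push_cast
  set m := p * n + j with hm
  set d : Fin r →₀ ℕ := Finsupp.equivFunOnFinite.symm (fun _ => m) with hd
  have memconst : ∀ a : ℕ, (fun _ : Fin r => a) ∈ piAntidiag (univ : Finset (Fin r)) (r * a) := by
    intro a
    rw [Finset.mem_piAntidiag]
    exact ⟨by simp [Finset.sum_const, mul_comm], fun i _ => Finset.mem_univ i⟩
  -- Claim 1 : coeff d of (∑ X i)^(r*m) is the multinomial coefficient
  have claim1 : MvPolynomial.coeff d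
      ((∑ i : Fin r, (X i : MvPolynomial (Fin r) (ZMod p))) ^ (r * m)) =
      (Nat.multinomial (Finset.univ : Finset (Fin r)) (fun _ => m) : ZMod p) := by
    have h1 : (∑ i : Fin r, (X i : MvPolynomial (Fin r) (ZMod p))) =
        ∑ i : Fin r, (X i : MvPolynomial (Fin r) (ZMod p)) ^ 1 := by simp
    rw [h1, expand_sum_pow, coeff_sum_monomial]
    have hzero : ∀ k ∈ piAntidiag (univ : Finset (Fin r)) (r * m), k ≠ (fun _ : Fin r => m) →
        (if (Finsupp.equivFunOnFinite.symm fun i => 1 * k i) = d then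
          ((Nat.multinomial (univ : Finset (Fin r)) k : ZMod p)) else 0) = 0 := by
      intro k _ hne
      rw [if_neg]
      intro hcond
      apply hne
      funext i
      have := congrArg (fun f => f i) hcond
      simpa [hd] using this
    rw [Finset.sum_eq_single_of_mem _ (memconst m) hzero, if_pos]
    rw [hd]
    ext i
    simp
  -- Claim 2 : freshman's dream decomposition
  have claim2 : ((∑ i : Fin r, (X i : MvPolynomial (Fin r) (ZMod p))) ^ (r * m)) =
      (∑ i : Fin r, (X i : MvPolynomial (Fin r) (ZMod p)) ^ p) ^ (r * n) *
        (∑ i : Fin r, (X i : MvPolynomial (Fin r) (ZMod p))) ^ (r * j) := by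
    have h1 : r * m = p * (r * n) + r * j := by rw [hm]; ring
    rw [h1, pow_add, pow_mul, sum_pow_char]
  -- Claim 3 : coeff d of the decomposed product
  have claim3 : MvPolynomial.coeff d
      ((∑ i : Fin r, (X i : MvPolynomial (Fin r) (ZMod p)) ^ p) ^ (r * n) *
        (∑ i : Fin r, (X i : MvPolynomial (Fin r) (ZMod p))) ^ (r * j)) =
      (Nat.multinomial (Finset.univ : Finset (Fin r)) (fun _ => n) : ZMod p) *
        (Nat.multinomial (Finset.univ : Finset (Fin r)) (fun _ => j) : ZMod p) := by
    have h1 : (∑ i : Fin r, (X i : MvPolynomial (Fin r) (ZMod p))) =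
        ∑ i : Fin r, (X i : MvPolynomial (Fin r) (ZMod p)) ^ 1 := by simp
    rw [h1, expand_sum_pow p (r * n), expand_sum_pow 1 (r * j), Finset.sum_mul_sum]
    have hterm : ∀ (k k' : Fin r → ℕ),
        ((Nat.multinomial (univ : Finset (Fin r)) k : MvPolynomial (Fin r) (ZMod p)) *
            monomial (Finsupp.equivFunOnFinite.symm fun i => p * k i) 1) *
          ((Nat.multinomial (univ : Finset (Fin r)) k' : MvPolynomial (Fin r) (ZMod p)) *
            monomial (Finsupp.equivFunOnFinite.symm fun i => 1 * k' i) 1) =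
        ((Nat.multinomial (univ : Finset (Fin r)) k *
            Nat.multinomial (univ : Finset (Fin r)) k' : ℕ) : MvPolynomial (Fin r) (ZMod p)) *
          monomial (Finsupp.equivFunOnFinite.symm fun i => p * k i + k' i) 1 := by
      intro k k'
      rw [mul_mul_mul_comm, monomial_mul, mul_one, Nat.cast_mul]
      have hadd : (Finsupp.equivFunOnFinite.symm fun i => p * k i) +
          (Finsupp.equivFunOnFinite.symm fun i => 1 * k' i) =
          (Finsupp.equivFunOnFinite.symm fun i => p * k i + k' i) := by
        ext i
        simp
      rw [hadd]
    simp_rw [hterm]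
    rw [MvPolynomial.coeff_sum]
    have hinner : ∀ k ∈ piAntidiag (univ : Finset (Fin r)) (r * n),
        MvPolynomial.coeff d (∑ k' ∈ piAntidiag (univ : Finset (Fin r)) (r * j),
          ((Nat.multinomial (univ : Finset (Fin r)) k *
              Nat.multinomial (univ : Finset (Fin r)) k' : ℕ) : MvPolynomial (Fin r) (ZMod p)) *
            monomial (Finsupp.equivFunOnFinite.symm fun i => p * k i + k' i) 1) =
        ∑ k' ∈ piAntidiag (univ : Finset (Fin r)) (r * j),
          if (∀ i : Fin r, p * k i + k' i = m) then
            ((Nat.multinomial (univ : Finset (Fin r)) k : ZMod p) *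
              (Nat.multinomial (univ : Finset (Fin r)) k' : ZMod p)) else 0 := by
      intro k _
      rw [coeff_sum_monomial]
      refine Finset.sum_congr rfl fun k' _ => ?_
      refine if_congr ?_ (by push_cast; ring) rfl
      constructor
      · intro hcond i
        have := congrArg (fun f => f i) hcond
        simpa [hd] using this
      · intro hcond
        rw [hd]
        ext i
        simpa using hcond i
    rw [Finset.sum_congr rfl hinner]
    have houter : ∀ k ∈ piAntidiag (univ : Finset (Fin r)) (r * n),
        k ≠ (fun _ : Fin r => n) →
        (∑ k' ∈ piAntidiag (univ : Finset (Fin r)) (r * j),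
          if (∀ i : Fin r, p * k i + k' i = m) then
            ((Nat.multinomial (univ : Finset (Fin r)) k : ZMod p) *
              (Nat.multinomial (univ : Finset (Fin r)) k' : ZMod p)) else 0) = 0 := by
      intro k hk hne
      rw [Finset.sum_eq_zero]
      intro k' hk'
      rw [if_neg]
      intro hcond
      apply hne
      rw [Finset.mem_piAntidiag] at hk
      have hle : ∀ i : Fin r, k i ≤ n := by
        intro i
        have h := hcond i
        by_contra hcon
        have h2 : p * (n + 1) ≤ p * k i := Nat.mul_le_mul_left p (by omega)
        have h3 : p * (n + 1) = p * n + p := by ring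
        omega
      have hsum : ∑ i : Fin r, k i = ∑ _i : Fin r, n := by
        rw [hk.1]
        simp [Finset.sum_const, mul_comm]
      funext i
      exact (Finset.sum_eq_sum_iff_of_le (fun i _ => hle i)).1 hsum i (Finset.mem_univ i)
    rw [Finset.sum_eq_single_of_mem _ (memconst n) houter]
    have hzero' : ∀ k' ∈ piAntidiag (univ : Finset (Fin r)) (r * j),
        k' ≠ (fun _ : Fin r => j) →
        (if (∀ i : Fin r, p * n + k' i = m) then
          ((Nat.multinomial (univ : Finset (Fin r)) (fun _ : Fin r => n) : ZMod p) *
            (Nat.multinomial (univ : Finset (Fin r)) k' : ZMod p)) else 0) = 0 := by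
      intro k' _ hne
      rw [if_neg]
      intro hcond
      apply hne
      funext i
      have := hcond i
      omega
    rw [Finset.sum_eq_single_of_mem _ (memconst j) hzero', if_pos (fun i => hm.symm)]
  rw [← claim1, claim2, claim3]
end

section
/- Let K be a field, d, h, m positive integers, and let f_1, ..., f_m be elements of a field extension of K(x_1,...,x_n), with f_i algebraic over K(x_1,...,x_n) of degree at most d_i. Then the product f_1···f_m is algebraic over K(x_1,...,x_n) of degree at most d_1···d_m, and if each f_i has height at most h_i, then f_1···f_m has height at most m·(d_1···d_m)·max(h_1,...,h_m). -/
/-- The canonical map `K[x_1,…,x_n] → E` for a field extension `E` of `K(x_1,…,x_n)`. -/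
noncomputable def mvPolyToExt (K : Type*) [Field K] (n : ℕ) (E : Type*) [Field E]
    [Algebra (FractionRing (MvPolynomial (Fin n) K)) E] :
    MvPolynomial (Fin n) K →+* E :=
  (algebraMap (FractionRing (MvPolynomial (Fin n) K)) E).comp
    (algebraMap (MvPolynomial (Fin n) K) (FractionRing (MvPolynomial (Fin n) K)))

theorem aux_coeff_mul {K : Type*} [CommSemiring K] {σ : Type*}
    (p q : Polynomial (MvPolynomial σ K)) (a b : ℕ)
    (hp : ∀ k, (p.coeff k).totalDegree ≤ a) (hq : ∀ k, (q.coeff k).totalDegree ≤ b) :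
    ∀ k, ((p * q).coeff k).totalDegree ≤ a + b := by
  intro k
  rw [Polynomial.coeff_mul]
  refine le_trans (MvPolynomial.totalDegree_finset_sum _ _) (Finset.sup_le fun x _ => ?_)
  exact le_trans (MvPolynomial.totalDegree_mul _ _) (add_le_add (hp _) (hq _))

theorem aux_coeff_one {K : Type*} [CommSemiring K] {σ : Type*} (k : ℕ) :
    (((1 : Polynomial (MvPolynomial σ K))).coeff k).totalDegree = 0 := by
  rcases k with _ | k
  · simp
  · rw [Polynomial.coeff_one]; simp

theorem aux_coeff_prod {K : Type*} [CommSemiring K] {σ : Type*} {ι : Type*}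
    (s : Finset ι) (g : ι → Polynomial (MvPolynomial σ K)) (a : ℕ)
    (hg : ∀ i ∈ s, ∀ k, ((g i).coeff k).totalDegree ≤ a) :
    ∀ k, ((∏ i ∈ s, g i).coeff k).totalDegree ≤ s.card * a := by
  induction s using Finset.cons_induction with
  | empty => intro k; simp [aux_coeff_one]
  | cons i s his ih =>
    intro k
    rw [Finset.prod_cons, Finset.card_cons]
    have := aux_coeff_mul (g i) (∏ j ∈ s, g j) a (s.card * a)
      (hg i (Finset.mem_cons_self i s)) (ih fun j hj => hg j (Finset.mem_cons_of_mem hj)) k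
    calc ((g i * ∏ j ∈ s, g j).coeff k).totalDegree ≤ a + s.card * a := this
    _ = (s.card + 1) * a := by ring

theorem aux_coeff_sum {K : Type*} [CommSemiring K] {σ : Type*} {ι : Type*}
    (s : Finset ι) (g : ι → Polynomial (MvPolynomial σ K)) (a : ℕ)
    (hg : ∀ i ∈ s, ∀ k, ((g i).coeff k).totalDegree ≤ a) :
    ∀ k, ((∑ i ∈ s, g i).coeff k).totalDegree ≤ a := by
  intro k
  rw [Polynomial.finset_sum_coeff]
  exact le_trans (MvPolynomial.totalDegree_finset_sum _ _) (Finset.sup_le fun i hi => hg i hi k)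

theorem aux_coeff_intCast {K : Type*} [CommRing K] {σ : Type*} (z : ℤ) (k : ℕ) :
    (((z : ℤ) : Polynomial (MvPolynomial σ K)).coeff k).totalDegree = 0 := by
  rw [← Polynomial.C_eq_intCast, Polynomial.coeff_C]
  split
  · rw [← map_intCast (MvPolynomial.C (σ := σ) (R := K)) z, MvPolynomial.totalDegree_C]
  · simp

set_option maxHeartbeats 2000000

/-- Lemma 4.7(ii): if `f_1, …, f_m` in a field extension of `K(x_1,…,x_n)` are algebraic
over `K(x_1,…,x_n)` with `f_i` of degree at most `d_i` and height at most `h_i`, then the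
product `f_1 ⋯ f_m` is algebraic of degree at most `d_1 ⋯ d_m` and height at most
`m·(d_1 ⋯ d_m)·max(h_1,…,h_m)`. -/
theorem product_of_algebraic_bounds (K : Type*) [Field K] (n m : ℕ)
    (E : Type*) [Field E] [Algebra (FractionRing (MvPolynomial (Fin n) K)) E]
    (d h : Fin m → ℕ) (f : Fin m → E)
    (halg : ∀ i, ∃ P : Polynomial (MvPolynomial (Fin n) K), P ≠ 0 ∧
      P.natDegree ≤ d i ∧ (∀ k, (P.coeff k).totalDegree ≤ h i) ∧
      Polynomial.eval₂ (mvPolyToExt K n E) (f i) P = 0) :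
    ∃ P : Polynomial (MvPolynomial (Fin n) K), P ≠ 0 ∧
      P.natDegree ≤ ∏ i, d i ∧
      (∀ k, (P.coeff k).totalDegree ≤ m * (∏ i, d i) * Finset.univ.sup h) ∧
      Polynomial.eval₂ (mvPolyToExt K n E) (∏ i, f i) P = 0 := by
  classical
  set A := MvPolynomial (Fin n) K with hAdef
  set φ := mvPolyToExt K n E with hφdef
  choose P hP0 hPdeg hPh hPev using halg
  -- injectivity of φ
  have hφinj : Function.Injective φ := by
    rw [hφdef, mvPolyToExt, RingHom.coe_comp]
    exact (RingHom.injective _).comp (IsFractionRing.injective _ _)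
  set e : Fin m → ℕ := fun i => (P i).natDegree with hedef
  have he1 : ∀ i, 1 ≤ e i := by
    intro i
    by_contra hcon
    push_neg at hcon
    have he0 : (P i).natDegree = 0 := Nat.lt_one_iff.mp hcon
    have hPC : P i = Polynomial.C ((P i).coeff 0) := (Polynomial.eq_C_of_natDegree_eq_zero he0)
    have := hPev i
    rw [hPC, Polynomial.eval₂_C] at this
    have : (P i).coeff 0 = 0 := hφinj (by rwa [map_zero])
    exact hP0 i (by rw [hPC, this, map_zero])
  set c : Fin m → A := fun i => (P i).leadingCoeff with hcdef
  have hc0 : ∀ i, c i ≠ 0 := fun i => Polynomial.leadingCoeff_ne_zero.mpr (hP0 i)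
  have hch : ∀ i, (c i).totalDegree ≤ h i := fun i => hPh i (e i)
  -- reduction coefficients
  set r : Fin m → ℕ → ℕ → A := fun i j k =>
    if j + 1 = e i then -((P i).coeff k) else if k = j + 1 then c i else 0 with hrdef
  have hrdeg : ∀ i j k, (r i j k).totalDegree ≤ h i := by
    intro i j k
    rw [hrdef]
    dsimp only
    split
    · rw [MvPolynomial.totalDegree_neg]; exact hPh i k
    · split
      · exact hch i
      · simp
  have hred : ∀ i, ∀ j, j + 1 ≤ e i →
      φ (c i) * (f i) ^ (j + 1) = ∑ k ∈ Finset.range (e i), φ (r i j k) * (f i) ^ k := by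
    intro i j hj
    rcases eq_or_lt_of_le hj with heq | hlt
    · have h0 := hPev i
      rw [Polynomial.eval₂_eq_sum_range, Finset.sum_range_succ] at h0
      have hr : ∀ k, r i j k = -((P i).coeff k) := fun k => if_pos heq
      have hsum : ∑ k ∈ Finset.range (e i), φ (r i j k) * (f i) ^ k
          = - ∑ k ∈ Finset.range (e i), φ ((P i).coeff k) * (f i) ^ k := by
        rw [← Finset.sum_neg_distrib]
        exact Finset.sum_congr rfl fun k _ => by rw [hr k, map_neg, neg_mul]
      rw [hsum, heq]
      show φ ((P i).leadingCoeff) * (f i) ^ ((P i).natDegree) = _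
      rw [Polynomial.leadingCoeff]
      linear_combination h0
    · have hne : j + 1 ≠ e i := Nat.ne_of_lt hlt
      have hr : ∀ k, r i j k = if k = j + 1 then c i else 0 := fun k => if_neg hne
      calc φ (c i) * (f i) ^ (j + 1)
          = ∑ k ∈ Finset.range (e i), (if k = j + 1 then φ (c i) * (f i) ^ k else 0) := by
            rw [Finset.sum_ite_eq' (Finset.range (e i)) (j + 1) (fun k => φ (c i) * (f i) ^ k),
              if_pos (Finset.mem_range.mpr hlt)]
        _ = ∑ k ∈ Finset.range (e i), φ (r i j k) * (f i) ^ k := by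
            refine Finset.sum_congr rfl fun k _ => ?_
            rw [hr k, apply_ite φ, map_zero, ite_mul, zero_mul]
  -- the monomial basis index
  set S := ((i : Fin m) → Fin (e i)) with hSdef
  set N : Matrix S S A := fun a b => ∏ i, r i (a i) (b i) with hNdef
  set cc : A := ∏ i, c i with hccdef
  set v : S → E := fun a => ∏ i, (f i) ^ (a i : ℕ) with hvdef
  set z : E := ∏ i, f i with hzdef
  have hNdeg : ∀ a b, (N a b).totalDegree ≤ ∑ i, h i := fun a b =>
    le_trans (MvPolynomial.totalDegree_finset_prod _ _)
      (Finset.sum_le_sum fun i _ => hrdeg i _ _)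
  have hccdeg : cc.totalDegree ≤ ∑ i, h i :=
    le_trans (MvPolynomial.totalDegree_finset_prod _ _)
      (Finset.sum_le_sum fun i _ => hch i)
  have key : ∀ a : S, φ cc * (z * v a) = ∑ b : S, φ (N a b) * v b := by
    intro a
    have l1 : φ cc * (z * v a) = ∏ i, (φ (c i) * (f i) ^ ((a i : ℕ) + 1)) := by
      rw [hccdef, map_prod, hzdef, hvdef]
      rw [← Finset.prod_mul_distrib, ← Finset.prod_mul_distrib]
      exact Finset.prod_congr rfl fun i _ => by rw [pow_succ']
    have l2 : ∀ i : Fin m, φ (c i) * (f i) ^ ((a i : ℕ) + 1)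
        = ∑ k : Fin (e i), φ (r i (a i) k) * (f i) ^ (k : ℕ) := by
      intro i
      rw [hred i (a i) (a i).isLt,
        ← Fin.sum_univ_eq_sum_range (fun k => φ (r i (a i) k) * (f i) ^ k) (e i)]
    rw [l1, Finset.prod_congr rfl fun i _ => l2 i]
    rw [Finset.prod_univ_sum (fun i => (Finset.univ : Finset (Fin (e i))))
      (fun i k => φ (r i (a i) k) * (f i) ^ (k : ℕ)), Fintype.piFinset_univ]
    refine Finset.sum_congr rfl fun b _ => ?_
    rw [Finset.prod_mul_distrib, hNdef]
    dsimp only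
    rw [map_prod]
  have hv0 : v ≠ 0 := by
    intro hcon
    have h1 : v (fun i => ⟨0, he1 i⟩) = 1 := by
      rw [hvdef]; exact Finset.prod_eq_one fun i _ => by norm_num
    rw [hcon] at h1
    exact one_ne_zero h1.symm
  set W : Matrix S S E := fun a b => (if a = b then φ cc * z else 0) - φ (N a b) with hWdef
  have hWv : W.mulVec v = 0 := by
    funext a
    rw [Matrix.mulVec, Pi.zero_apply]
    have : dotProduct (W a) v = (∑ b, (if a = b then φ cc * z else 0) * v b) - ∑ b, φ (N a b) * v b := by
      rw [dotProduct, ← Finset.sum_sub_distrib]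
      exact Finset.sum_congr rfl fun b _ => by rw [hWdef]; dsimp only; rw [sub_mul]
    rw [this]
    have h2 : (∑ b, (if a = b then φ cc * z else 0) * v b) = φ cc * (z * v a) := by
      simp only [ite_mul, zero_mul]
      rw [Finset.sum_ite_eq Finset.univ a (fun b => φ cc * z * v b),
        if_pos (Finset.mem_univ a), mul_assoc]
    rw [h2, key a, sub_self]
  have hdetW : W.det = 0 := Matrix.exists_mulVec_eq_zero_iff.mp ⟨v, hv0, hWv⟩
  set QA : Matrix S S (Polynomial A) := fun a b =>
    (if a = b then Polynomial.C cc * Polynomial.X else 0) - Polynomial.C (N a b) with hQAdef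
  -- evaluation of the determinant at z
  set ev : Polynomial A →+* E := Polynomial.eval₂RingHom φ z with hevdef
  have hmap : ev.mapMatrix QA = W := by
    ext a b
    rw [RingHom.mapMatrix_apply, Matrix.map_apply, hQAdef, hWdef]
    dsimp only
    rw [map_sub, apply_ite ev, map_zero, hevdef]
    simp [Polynomial.eval₂_mul]
  have heval : Polynomial.eval₂ φ z QA.det = 0 := by
    have h1 := RingHom.map_det ev QA
    rw [hmap, hdetW] at h1
    rw [hevdef] at h1
    simpa using h1
  -- non-vanishing via the fraction field
  set F := FractionRing (MvPolynomial (Fin n) K) with hFdef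
  set ι : A →+* F := algebraMap A F with hιdef
  have hιinj : Function.Injective ι := IsFractionRing.injective _ _
  have hcc0 : cc ≠ 0 := Finset.prod_ne_zero_iff.mpr fun i _ => hc0 i
  have hccF : ι cc ≠ 0 := fun hcon => hcc0 (hιinj (by rwa [map_zero]))
  set M : Matrix S S F := (ι cc)⁻¹ • (N.map ι) with hMdef
  have hψQA : (Polynomial.mapRingHom ι).mapMatrix QA = (Polynomial.C (ι cc)) • M.charmatrix := by
    ext a b : 2
    rw [RingHom.mapMatrix_apply, Matrix.map_apply, Matrix.smul_apply, hQAdef]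
    dsimp only
    by_cases hab : a = b
    · subst hab
      rw [Matrix.charmatrix_apply_eq, if_pos rfl]
      simp only [Polynomial.coe_mapRingHom, Polynomial.map_sub, Polynomial.map_mul,
        Polynomial.map_C, Polynomial.map_X]
      rw [smul_eq_mul, mul_sub, ← Polynomial.C_mul, hMdef]
      rw [Matrix.smul_apply, Matrix.map_apply, smul_eq_mul, mul_inv_cancel_left₀ hccF]
    · rw [Matrix.charmatrix_apply_ne _ _ _ hab, if_neg hab]
      simp only [Polynomial.coe_mapRingHom, Polynomial.map_sub, Polynomial.map_zero,
        Polynomial.map_C]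
      rw [zero_sub, hMdef, Matrix.smul_apply, Matrix.map_apply]
      simp only [smul_eq_mul]
      have h9 : (ι cc) * ((ι cc)⁻¹ * ι (N a b)) = ι (N a b) := mul_inv_cancel_left₀ hccF _
      have hx : Polynomial.C (ι cc) * -Polynomial.C ((ι cc)⁻¹ * ι (N a b))
          = -Polynomial.C (ι (N a b)) := by
        calc Polynomial.C (ι cc) * -Polynomial.C ((ι cc)⁻¹ * ι (N a b))
            = -(Polynomial.C (ι cc) * Polynomial.C ((ι cc)⁻¹ * ι (N a b))) := by ring
          _ = -Polynomial.C (ι (N a b)) := by rw [← Polynomial.C_mul, h9]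
      rw [hx]
  have hQne : QA.det ≠ 0 := by
    intro hcon
    have h1 : (Polynomial.C (ι cc)) ^ Fintype.card S * M.charmatrix.det = 0 := by
      have h0 := RingHom.map_det (Polynomial.mapRingHom ι) QA
      rw [hψQA, Matrix.det_smul] at h0
      rw [← h0, hcon, map_zero]
    have h2 : M.charmatrix.det ≠ 0 := (Matrix.charpoly_monic M).ne_zero
    have h3 : (Polynomial.C (ι cc)) ^ Fintype.card S ≠ 0 :=
      pow_ne_zero _ (fun hc => hccF (by simpa using congrArg (fun p => Polynomial.coeff p 0) hc))
    exact (mul_ne_zero h3 h2) h1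
  -- degree bound
  have hcard : Fintype.card S = ∏ i, e i := by
    show Fintype.card ((i : Fin m) → Fin (e i)) = ∏ i, e i
    simp
  have hcardle : Fintype.card S ≤ ∏ i, d i := by
    rw [hcard]; exact Finset.prod_le_prod' fun i _ => hPdeg i
  have hQAdeg : ∀ a b, (QA a b).natDegree ≤ 1 := by
    intro a b
    rw [hQAdef]
    dsimp only
    refine le_trans (Polynomial.natDegree_sub_le _ _) (max_le ?_ (by simp))
    split
    · exact le_trans (Polynomial.natDegree_mul_le) (by simp)
    · simp
  have hdeg : QA.det.natDegree ≤ ∏ i, d i := by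
    rw [Matrix.det_apply']
    refine le_trans (Polynomial.natDegree_sum_le_of_forall_le _ _ fun σ _ => ?_) hcardle
    refine le_trans (Polynomial.natDegree_mul_le) ?_
    rw [Polynomial.natDegree_intCast, zero_add]
    refine le_trans (Polynomial.natDegree_prod_le _ _) ?_
    calc ∑ a : S, (QA (σ a) a).natDegree ≤ ∑ _a : S, 1 :=
          Finset.sum_le_sum fun a _ => hQAdeg _ _
      _ = Fintype.card S := by simp
  -- height bound
  have hQAcoeff : ∀ a b k, ((QA a b).coeff k).totalDegree ≤ ∑ i, h i := by
    intro a b k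
    rw [hQAdef]
    dsimp only
    rw [Polynomial.coeff_sub]
    match k with
    | 0 =>
      have : ((if a = b then Polynomial.C cc * Polynomial.X else 0) : Polynomial A).coeff 0 = 0 := by
        split <;> simp
      rw [this, zero_sub, Polynomial.coeff_C, if_pos rfl, MvPolynomial.totalDegree_neg]
      exact hNdeg a b
    | 1 =>
      have : ((if a = b then Polynomial.C cc * Polynomial.X else 0) : Polynomial A).coeff 1
          = if a = b then cc else 0 := by
        split <;> simp
      rw [this, Polynomial.coeff_C, if_neg one_ne_zero, sub_zero]
      split
      · exact hccdeg
      · simp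
    | (k + 2) =>
      have h1 : ((if a = b then Polynomial.C cc * Polynomial.X else 0) : Polynomial A).coeff (k+2) = 0 := by
        split <;> simp [Polynomial.coeff_C_mul, Polynomial.coeff_X]
      rw [h1, Polynomial.coeff_C, if_neg (by omega), zero_sub, neg_zero]
      simp
  have hcoeff : ∀ k, (QA.det.coeff k).totalDegree ≤ m * (∏ i, d i) * Finset.univ.sup h := by
    intro k
    rw [Matrix.det_apply']
    have hterm : ∀ σ : Equiv.Perm S, ∀ k,
        ((((Equiv.Perm.sign σ : ℤ) : Polynomial A) * ∏ a, QA (σ a) a).coeff k).totalDegree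
          ≤ 0 + Fintype.card S * (∑ i, h i) := by
      intro σ
      refine aux_coeff_mul _ _ 0 (Fintype.card S * (∑ i, h i))
        (fun k => le_of_eq (aux_coeff_intCast _ k)) (fun k => ?_)
      have := aux_coeff_prod Finset.univ (fun a => QA (σ a) a) (∑ i, h i)
        (fun a _ k => hQAcoeff _ _ k) k
      simpa [Finset.card_univ] using this
    refine le_trans (aux_coeff_sum Finset.univ _ _ (fun σ _ => hterm σ) k) ?_
    rw [zero_add]
    have h2 : ∑ i, h i ≤ m * Finset.univ.sup h := by
      have := Finset.sum_le_card_nsmul Finset.univ h (Finset.univ.sup h)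
        (fun i _ => Finset.le_sup (Finset.mem_univ i))
      simpa [Finset.card_univ, smul_eq_mul] using this
    calc Fintype.card S * (∑ i, h i) ≤ (∏ i, d i) * (m * Finset.univ.sup h) :=
          Nat.mul_le_mul hcardle h2
      _ = m * (∏ i, d i) * Finset.univ.sup h := by ring
  exact ⟨QA.det, hQne, hdeg, hcoeff, heval⟩
end

section
/- Let f(x) = ∑_{n≥0} a(n)x^n ∈ Z[[x]] satisfy a homogeneous linear differential equation ∑_{i=0}^r P_i(x) f^{(i)}(x) = 0 with P_i ∈ Z[x], P_r ≠ 0, and suppose the coefficient sequence has the Lucas property with a(0)=1. Let d = max_i deg P_i and m = r + d. Then for every prime p, setting A(x) = ∑_{n=0}^{p-1} a(n)x^n, every non-constant irreducible factor C(x) of (A mod p) ∈ F_p[x] either satisfies that C(x)^m does not divide (A mod p), or C(x) divides (P_r mod p). -/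
/-!
Reducing modulo `p`, the Lucas property says `f ≡ A(x) f(x^p)`, and `f(x^p)` is a nonzero series
with vanishing derivative in `𝔽_p⟦x⟧`, so `A` itself solves the reduced equation
`∑ P̄ᵢ A⁽ⁱ⁾ = 0`. Write `A = C^e U` with `C ∤ U`; then `r ≤ e < p`. Since `C` is separable and
`e, e - 1, …, e - r + 1` are nonzero mod `p`, each derivative `A⁽ⁱ⁾` (`i ≤ r`) is exactly divisible
by `C^(e-i)`. Every term of the equation but the last is therefore divisible by `C^(e-r+1)`, and so
is `P̄ᵣ A⁽ʳ⁾`, which forces `C ∣ P̄ᵣ`.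
-/

/-- Formal derivative of an integer power series. -/
noncomputable def psDeriv (f : PowerSeries ℤ) : PowerSeries ℤ :=
  PowerSeries.mk fun n => (n + 1 : ℤ) * PowerSeries.coeff (n + 1) f

namespace Polynomial

variable {F : Type*} [Field F] {C : F[X]}

theorem not_dvd_derivative_of_separable (hC : Irreducible C) (hsep : C.Separable) :
    ¬C ∣ derivative C :=
  fun h => hC.not_isUnit (hsep.isUnit_of_dvd' dvd_rfl h)

theorem exists_derivative_pow_succ_mul_eq_pow_mul_not_dvd (hC : Irreducible C)
    (hsep : C.Separable) {U : F[X]} (hU : ¬C ∣ U) {e : ℕ} (he : ((e + 1 : ℕ) : F) ≠ 0) :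
    ∃ V, derivative (C ^ (e + 1) * U) = C ^ e * V ∧ ¬C ∣ V := by
  refine ⟨Polynomial.C ((e + 1 : ℕ) : F) * derivative C * U + C * derivative U, ?_, ?_⟩
  · rw [derivative_mul, derivative_pow_succ]
    push_cast
    ring
  · intro hV
    have hmain : C ∣ Polynomial.C ((e + 1 : ℕ) : F) * derivative C * U :=
      (dvd_add_left (dvd_mul_right C _)).1 hV
    rcases hC.prime.dvd_or_dvd hmain with h | hU'
    · rcases hC.prime.dvd_or_dvd h with hc | hC'
      · exact hC.not_isUnit (isUnit_of_dvd_unit hc (isUnit_C.2 he.isUnit))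
      · exact not_dvd_derivative_of_separable hC hsep hC'
    · exact hU hU'

theorem exists_iterate_derivative_pow_mul_eq_pow_mul_not_dvd (hC : Irreducible C)
    (hsep : C.Separable) {U : F[X]} (hU : ¬C ∣ U) {e : ℕ}
    (he : ∀ k, 0 < k → k ≤ e → (k : F) ≠ 0) :
    ∀ i ≤ e, ∃ V, derivative^[i] (C ^ e * U) = C ^ (e - i) * V ∧ ¬C ∣ V
  | 0, _ => ⟨U, rfl, hU⟩
  | i + 1, hi => by
    obtain ⟨V, hV, hCV⟩ :=
      exists_iterate_derivative_pow_mul_eq_pow_mul_not_dvd hC hsep hU he i (by omega)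
    have hei : e - i = e - (i + 1) + 1 := by omega
    obtain ⟨W, hW, hCW⟩ := exists_derivative_pow_succ_mul_eq_pow_mul_not_dvd hC hsep hCV
      (e := e - (i + 1)) (he _ (by omega) (by omega))
    exact ⟨W, by rw [Function.iterate_succ_apply', hV, hei, hW], hCW⟩

theorem dvd_last_of_sum_mul_iterate_derivative_eq_zero (hC : Irreducible C)
    (hsep : C.Separable) {U : F[X]} (hU : ¬C ∣ U) {e r : ℕ} (hr : r ≤ e)
    (he : ∀ k, 0 < k → k ≤ e → (k : F) ≠ 0) (Q : Fin (r + 1) → F[X])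
    (hQ : ∑ i : Fin (r + 1), Q i * derivative^[i] (C ^ e * U) = 0) :
    C ∣ Q (Fin.last r) := by
  have hdiff := exists_iterate_derivative_pow_mul_eq_pow_mul_not_dvd hC hsep hU he
  obtain ⟨V, hV, hCV⟩ := hdiff r hr
  have hlower : C ^ (e - r + 1) ∣ ∑ i : Fin r, Q i.castSucc * derivative^[i] (C ^ e * U) := by
    refine Finset.dvd_sum fun i _ => Dvd.dvd.mul_left ?_ _
    obtain ⟨W, hW, -⟩ := hdiff i (by omega)
    rw [hW]
    exact (pow_dvd_pow C (by omega)).mul_right W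
  rw [Fin.sum_univ_castSucc, Fin.val_last, hV] at hQ
  have htop : C ^ (e - r) * C ∣ C ^ (e - r) * (Q (Fin.last r) * V) := by
    rw [← pow_succ, mul_left_comm, ← neg_eq_of_add_eq_zero_right hQ]
    exact (dvd_neg).2 hlower
  have hQV := (mul_dvd_mul_iff_left (pow_ne_zero _ hC.ne_zero)).1 htop
  exact (hC.prime.dvd_or_dvd hQV).resolve_right hCV

end Polynomial

open PowerSeries

theorem Derivation.iterate_mul_of_apply_eq_zero {R A : Type*} [CommSemiring R] [CommSemiring A]
    [Algebra R A] (D : Derivation R A A) {g : A} (hg : D g = 0) (x : A) (i : ℕ) :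
    D^[i] (x * g) = D^[i] x * g := by
  induction i with
  | zero => rfl
  | succ i ih =>
    rw [Function.iterate_succ_apply', Function.iterate_succ_apply', ih, D.leibniz, hg,
      smul_zero, zero_add, smul_eq_mul, mul_comm]

namespace PowerSeries

theorem iterate_derivative_coe {R : Type*} [CommSemiring R] (Q : Polynomial R) (i : ℕ) :
    (d⁄dX R)^[i] (Q : R⟦X⟧) = ((Polynomial.derivative^[i] Q : Polynomial R) : R⟦X⟧) := by
  induction i with
  | zero => rfl
  | succ i ih => rw [Function.iterate_succ_apply', Function.iterate_succ_apply', ih, derivative_coe]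

theorem map_derivative {R S : Type*} [CommSemiring R] [CommSemiring S] (φ : R →+* S)
    (f : R⟦X⟧) : map φ (d⁄dX R f) = d⁄dX S (map φ f) := by
  ext n
  simp [coeff_derivative]

theorem map_iterate_derivative {R S : Type*} [CommSemiring R] [CommSemiring S] (φ : R →+* S)
    (f : R⟦X⟧) (i : ℕ) : map φ ((d⁄dX R)^[i] f) = (d⁄dX S)^[i] (map φ f) := by
  induction i with
  | zero => rfl
  | succ i ih =>
    rw [Function.iterate_succ_apply', Function.iterate_succ_apply', map_derivative, ih]

theorem derivative_expand_eq_zero {R : Type*} [CommRing R] (p : ℕ) [CharP R p] (hp : p ≠ 0)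
    (f : R⟦X⟧) : d⁄dX R (expand p hp f) = 0 := by
  ext n
  rw [coeff_derivative, coeff_expand, map_zero]
  split_ifs with h
  · rw [← Nat.cast_succ, (CharP.cast_eq_zero_iff R p _).2 h, mul_zero]
  · rw [zero_mul]

theorem eq_trunc_mul_expand {R : Type*} [CommRing R] {p : ℕ} (hp : p ≠ 0) {f : R⟦X⟧}
    (hf : ∀ n j, j < p → coeff (p * n + j) f = coeff n f * coeff j f) :
    f = (trunc p f : R⟦X⟧) * expand p hp f := by
  have hp0 : 0 < p := Nat.pos_of_ne_zero hp
  ext N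
  rw [coeff_mul, Finset.sum_eq_single_of_mem (N % p, p * (N / p))
    (Finset.HasAntidiagonal.mem_antidiagonal.2 (Nat.mod_add_div N p))]
  · rw [Polynomial.coeff_coe, coeff_trunc, if_pos (Nat.mod_lt N hp0), coeff_expand_mul,
      mul_comm, ← hf _ _ (Nat.mod_lt N hp0), Nat.div_add_mod]
  · rintro ⟨j, k⟩ hjk hne
    rw [Finset.HasAntidiagonal.mem_antidiagonal] at hjk
    by_cases hj : j < p
    · have hk : ¬p ∣ k := by
        rintro ⟨t, rfl⟩
        obtain ⟨rfl, rfl⟩ := (Nat.div_mod_unique hp0).2 ⟨hjk, hj⟩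
        exact hne rfl
      rw [coeff_expand_of_not_dvd p hp f hk, mul_zero]
    · rw [Polynomial.coeff_coe, coeff_trunc, if_neg hj, zero_mul]

end PowerSeries

theorem psDeriv_eq_derivative : psDeriv = d⁄dX ℤ := by
  funext f
  ext n
  rw [psDeriv, coeff_mk, coeff_derivative]
  ring

theorem sum_map_mul_iterate_derivative_eq_zero {S : Type*} [CommRing S] [IsDomain S]
    (φ : ℤ →+* S) {f : PowerSeries ℤ} {r : ℕ} {P : Fin (r + 1) → Polynomial ℤ}
    (hode : ∑ i : Fin (r + 1),
      (Polynomial.coeToPowerSeries.ringHom (P i)) * psDeriv^[(i : ℕ)] f = 0)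
    {A : Polynomial S} {g : S⟦X⟧} (hfg : map φ f = A * g) (hg : d⁄dX S g = 0) (hg0 : g ≠ 0) :
    ∑ i : Fin (r + 1), (P i).map φ * Polynomial.derivative^[i] A = 0 := by
  have hmap := congrArg (map φ) hode
  simp only [map_sum, map_mul, map_zero, psDeriv_eq_derivative, map_iterate_derivative, hfg,
    (d⁄dX S).iterate_mul_of_apply_eq_zero hg, iterate_derivative_coe,
    Polynomial.coeToPowerSeries.ringHom_apply] at hmap
  have hcoe : ((∑ i : Fin (r + 1), (P i).map φ * Polynomial.derivative^[i] A : Polynomial S) :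
      S⟦X⟧) * g = 0 := by
    rw [← hmap, ← Polynomial.coeToPowerSeries.ringHom_apply, map_sum, Finset.sum_mul]
    simp only [Polynomial.coeToPowerSeries.ringHom_apply, Polynomial.coe_mul,
      Polynomial.polynomial_map_coe, mul_assoc]
  exact Polynomial.coe_eq_zero_iff.1 ((mul_eq_zero.1 hcoe).resolve_right hg0)

theorem lucas_ode_factor_bound_general (f : PowerSeries ℤ)
    (h0 : PowerSeries.coeff 0 f = 1)
    (hLucas : ∀ p : ℕ, p.Prime → ∀ n j : ℕ, j < p →
      (PowerSeries.coeff (p * n + j) f) ≡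
        (PowerSeries.coeff n f) * (PowerSeries.coeff j f) [ZMOD p])
    (r d : ℕ) (P : Fin (r + 1) → Polynomial ℤ)
    (hode : ∑ i : Fin (r + 1),
      (Polynomial.coeToPowerSeries.ringHom (P i)) * psDeriv^[(i : ℕ)] f = 0)
    (p : ℕ) (hp : p.Prime)
    (A : Polynomial (ZMod p))
    (hA : A = ∑ n ∈ Finset.range p,
      Polynomial.C ((PowerSeries.coeff (R := ℤ) n f : ZMod p)) * Polynomial.X ^ n)
    (C : Polynomial (ZMod p)) (hCirr : Irreducible C) :
    ¬ (C ^ (r + d) ∣ A) ∨ C ∣ (P (Fin.last r)).map (Int.castRingHom (ZMod p)) := by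
  rw [or_iff_not_imp_left, not_not]
  intro hdvd
  have : Fact p.Prime := ⟨hp⟩
  set φ := Int.castRingHom (ZMod p)
  have hAtrunc : A = trunc p (map φ f) := by
    rw [hA, trunc_apply, ← Finset.range_eq_Ico]
    simp only [← Polynomial.C_mul_X_pow_eq_monomial, coeff_map, φ, eq_intCast]
  have hfactor : map φ f = A * expand p hp.ne_zero (map φ f) := by
    rw [hAtrunc]
    refine eq_trunc_mul_expand hp.ne_zero fun n j hj => ?_
    simpa [coeff_map, φ] using (ZMod.intCast_eq_intCast_iff _ _ _).2 (hLucas p hp n j hj)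
  have hf0 : map φ f ≠ 0 := fun h => by simpa [coeff_map, h0] using congrArg (coeff 0) h
  rw [hfactor] at hf0
  have hodeA := sum_map_mul_iterate_derivative_eq_zero φ hode hfactor
    (derivative_expand_eq_zero p hp.ne_zero _) (right_ne_zero_of_mul hf0)
  have hA0 : A ≠ 0 := fun h => hf0 (by simp [h])
  have hAdeg : A.natDegree < p := by
    rw [Polynomial.natDegree_lt_iff_degree_lt hA0, hAtrunc]
    exact degree_trunc_lt _ _
  obtain ⟨e, U, hU, rfl⟩ := WfDvdMonoid.max_power_factor hA0 hCirr
  have hre : r ≤ e := (pow_dvd_pow_iff hCirr.ne_zero hCirr.not_isUnit).1 <|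
    hCirr.prime.pow_dvd_of_dvd_mul_right _ hU ((pow_dvd_pow C (Nat.le_add_right r d)).trans hdvd)
  have hep : e < p := calc
    e ≤ (C ^ e).natDegree := by
      rw [Polynomial.natDegree_pow]
      exact Nat.le_mul_of_pos_right _ hCirr.natDegree_pos
    _ ≤ (C ^ e * U).natDegree :=
      Polynomial.natDegree_le_of_dvd (dvd_mul_right _ _) hA0
    _ < p := hAdeg
  refine Polynomial.dvd_last_of_sum_mul_iterate_derivative_eq_zero hCirr
    (PerfectField.separable_of_irreducible hCirr) hU hre (fun k hk hke hk0 => ?_) _ hodeA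
  exact absurd (Nat.le_of_dvd hk ((ZMod.natCast_eq_zero_iff k p).1 hk0)) (by omega)

/-- Lemma 7.4: let `f = ∑ a(n)xⁿ ∈ ℤ[[x]]` satisfy `∑_{i=0}^r P_i(x) f^{(i)}(x) = 0`
with `P_r ≠ 0`, have the Lucas property, and `a(0) = 1`. Let `d` bound the degrees of the
`P_i` and set `m = r + d`. Then for every prime `p`, with `A(x) = ∑_{n<p} a(n)xⁿ`, every
non-constant irreducible factor `C(x)` of `Ā ∈ 𝔽_p[x]` either satisfies that `C^m` does
not divide `Ā`, or `C` divides `P_r mod p`. -/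
theorem lucas_ode_factor_bound (f : PowerSeries ℤ)
    (h0 : PowerSeries.coeff 0 f = 1)
    (hLucas : ∀ p : ℕ, p.Prime → ∀ n j : ℕ, j < p →
      (PowerSeries.coeff (p * n + j) f) ≡
        (PowerSeries.coeff n f) * (PowerSeries.coeff j f) [ZMOD p])
    (r d : ℕ) (P : Fin (r + 1) → Polynomial ℤ)
    (hPr : P (Fin.last r) ≠ 0)
    (hd : ∀ i, (P i).natDegree ≤ d)
    (hode : ∑ i : Fin (r + 1),
      (Polynomial.coeToPowerSeries.ringHom (P i)) * psDeriv^[(i : ℕ)] f = 0)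
    (p : ℕ) (hp : p.Prime)
    (A : Polynomial (ZMod p))
    (hA : A = ∑ n ∈ Finset.range p,
      Polynomial.C ((PowerSeries.coeff (R := ℤ) n f : ZMod p)) * Polynomial.X ^ n)
    (C : Polynomial (ZMod p)) (hCirr : Irreducible C) (hC : 0 < C.natDegree)
    (hCA : C ∣ A) :
    ¬ (C ^ (r + d) ∣ A) ∨ C ∣ (P (Fin.last r)).map (Int.castRingHom (ZMod p)) :=
  lucas_ode_factor_bound_general f h0 hLucas r d P hode p hp A hA C hCirr
end
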